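/- Let T be a triangulated category with metric {B_n} and improvement {C_n}. Then the completion of T with respect to {B_n} is a (full, shift-stable, extension-closed) triangulated subcategory of the completion with respect to {C_n}. Concretely: the pre-completions agree, 𝔏_B(T) = 𝔏_C(T), and the compactly supported elements satisfy 𝔠_B(T) ⊆ 𝔠_C(T), hence 𝔖_B(T) = 𝔏_B(T) ∩ 𝔠_B(T) ⊆ 𝔏_C(T) ∩ 𝔠_C(T) = 𝔖_C(T). -/

import Mathlib

open CategoryTheory Limits Pretriangulated ZeroObject

universe v u

section Defs

variable {C : Type u} [Category.{v} C] [Preadditive C] [HasZeroObject C]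
  [HasShift C ℤ] [∀ n : ℤ, (shiftFunctor C n).Additive] [Pretriangulated C]

/-- A metric on a triangulated category: a non-increasing chain of full
(iso-closed) subcategories containing `0` and closed under extensions. -/
structure IsMetric (B : ℕ → Set C) : Prop where
  antitone : ∀ n : ℕ, B (n + 1) ⊆ B n
  zero_mem : ∀ n : ℕ, (0 : C) ∈ B n
  iso_closed : ∀ n : ℕ, ∀ ⦃X Y : C⦄, (X ≅ Y) → X ∈ B n → Y ∈ B n
  ext_closed : ∀ n : ℕ, ∀ T : Triangle C, T ∈ (distTriang C) →
    T.obj₁ ∈ B n → T.obj₃ ∈ B n → T.obj₂ ∈ B n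

/-- The rapid decrease condition: `Σ⁻¹B_{n+1} ∪ B_{n+1} ∪ ΣB_{n+1} ⊆ B_n`. -/
def IsGoodMetric (B : ℕ → Set C) : Prop :=
  ∀ n : ℕ, ∀ X ∈ B (n + 1),
    X ∈ B n ∧ X⟦(1 : ℤ)⟧ ∈ B n ∧ X⟦(-1 : ℤ)⟧ ∈ B n

/-- The improvement of a metric `{B n}`: `C 0 = B 0` and
`C (n+1) = B (n+1) ∩ Σ C n ∩ Σ⁻¹ C n`. -/
def improv (B : ℕ → Set C) : ℕ → Set C
  | 0 => B 0
  | n + 1 => B (n + 1) ∩ {X : C | X⟦(-1 : ℤ)⟧ ∈ improv B n}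
      ∩ {X : C | X⟦(1 : ℤ)⟧ ∈ improv B n}

/-- `coneIn B f`: some cone of `f` lies in `B`. -/
def coneIn (B : Set C) {X Y : C} (f : X ⟶ Y) : Prop :=
  ∃ (Z : C) (g : Y ⟶ Z) (h : Z ⟶ X⟦(1 : ℤ)⟧),
    Triangle.mk f g h ∈ (distTriang C) ∧ Z ∈ B

/-- `coneShiftIn B j f`: some cone `Z` of `f` satisfies `Z⟦j⟧ ∈ B`. -/
def coneShiftIn (B : Set C) (j : ℤ) {X Y : C} (f : X ⟶ Y) : Prop :=
  ∃ (Z : C) (g : Y ⟶ Z) (h : Z ⟶ X⟦(1 : ℤ)⟧),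
    Triangle.mk f g h ∈ (distTriang C) ∧ Z⟦j⟧ ∈ B

/-- A Cauchy sequence with respect to the metric `B`. -/
def IsCauchy (B : ℕ → Set C) (E : ℕ ⥤ C) : Prop :=
  ∀ i : ℕ, ∃ M : ℕ, ∀ (m m' : ℕ) (h : m ≤ m'), M ≤ m →
    coneIn (B i) (E.map (homOfLE h))

/-- A good Cauchy sequence with respect to the metric `B`. -/
def IsGoodCauchy (B : ℕ → Set C) (E : ℕ ⥤ C) : Prop :=
  ∀ (i : ℕ) (j : ℤ), ∃ M : ℕ, ∀ (m m' : ℕ) (h : m ≤ m'), M ≤ m →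
    coneShiftIn (B i) j (E.map (homOfLE h))

/-- The compactly supported objects of `Mod-C`:
`𝔠(C) = ⋂_{j ∈ ℤ} ⋃_{i ∈ ℕ} Y(Σ^j B i)^⊥`. -/
def cSupp (B : ℕ → Set C) : Set (Cᵒᵖ ⥤ AddCommGrpCat.{v}) :=
  {F | ∀ j : ℤ, ∃ i : ℕ, ∀ X ∈ B i,
    ∀ f : preadditiveYoneda.obj (X⟦j⟧) ⟶ F, f = 0}

/-- The weakly compactly supported objects of `Mod-C`:
`𝔴𝔠(C) = ⋃_{i ∈ ℕ} Y(B i)^⊥`. -/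
def wcSupp (B : ℕ → Set C) : Set (Cᵒᵖ ⥤ AddCommGrpCat.{v}) :=
  {F | ∃ i : ℕ, ∀ X ∈ B i, ∀ f : preadditiveYoneda.obj X ⟶ F, f = 0}

/-- The pre-completion `𝔏(C) ⊆ Mod-C`: functors isomorphic to module colimits
of good Cauchy sequences. -/
def preCompletion (B : ℕ → Set C) : Set (Cᵒᵖ ⥤ AddCommGrpCat.{v}) :=
  {P | ∃ E : ℕ ⥤ C, IsGoodCauchy B E ∧
    Nonempty (P ≅ colimit (E ⋙ preadditiveYoneda))}

section Aux

variable {C : Type u} [Category.{v} C] [Preadditive C] [HasZeroObject C]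
  [HasShift C ℤ] [∀ n : ℤ, (shiftFunctor C n).Additive] [Pretriangulated C]

lemma improv_subset (B : ℕ → Set C) (n : ℕ) : improv B n ⊆ B n := by
  cases n with
  | zero => exact subset_rfl
  | succ n => intro X hX; exact hX.1.1

lemma improv_iso_closed (B : ℕ → Set C) (hB : IsMetric B) :
    ∀ n : ℕ, ∀ ⦃X Y : C⦄, (X ≅ Y) → X ∈ improv B n → Y ∈ improv B n := by
  intro n
  induction n with
  | zero => exact hB.iso_closed 0
  | succ n ih =>
    intro X Y e hX
    exact ⟨⟨hB.iso_closed _ e hX.1.1, ih ((shiftFunctor C (-1 : ℤ)).mapIso e) hX.1.2⟩,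
      ih ((shiftFunctor C (1 : ℤ)).mapIso e) hX.2⟩

/-- Cones of the same morphism are isomorphic. -/
lemma cone_iso {X Y : C} (f : X ⟶ Y) {Z Z' : C} (g : Y ⟶ Z) (h : Z ⟶ X⟦(1 : ℤ)⟧)
    (g' : Y ⟶ Z') (h' : Z' ⟶ X⟦(1 : ℤ)⟧)
    (hT : Triangle.mk f g h ∈ distTriang C) (hT' : Triangle.mk f g' h' ∈ distTriang C) :
    Nonempty (Z ≅ Z') :=
  ⟨Triangle.π₃.mapIso (isoTriangleOfIso₁₂ _ _ hT hT' (Iso.refl _) (Iso.refl _) (by exact (Category.comp_id f).trans (Category.id_comp f).symm))⟩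

lemma goodCauchy_improv (B : ℕ → Set C) (hB : IsMetric B) (E : ℕ ⥤ C)
    (hE : IsGoodCauchy B E) : IsGoodCauchy (improv B) E := by
  intro i
  induction i with
  | zero => exact hE 0
  | succ i ih =>
    intro j
    obtain ⟨M₀, hM₀⟩ := hE (i + 1) j
    obtain ⟨M₁, hM₁⟩ := ih (j - 1)
    obtain ⟨M₂, hM₂⟩ := ih (j + 1)
    refine ⟨max M₀ (max M₁ M₂), fun m m' h hm => ?_⟩
    obtain ⟨Z, g, hh, hT, hZ⟩ := hM₀ m m' h (le_trans (le_max_left _ _) hm)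
    obtain ⟨Z₁, g₁, h₁, hT₁, hZ₁⟩ :=
      hM₁ m m' h (le_trans (le_trans (le_max_left _ _) (le_max_right _ _)) hm)
    obtain ⟨Z₂, g₂, h₂, hT₂, hZ₂⟩ :=
      hM₂ m m' h (le_trans (le_trans (le_max_right _ _) (le_max_right _ _)) hm)
    obtain ⟨e₁⟩ := cone_iso _ g₁ h₁ g hh hT₁ hT
    obtain ⟨e₂⟩ := cone_iso _ g₂ h₂ g hh hT₂ hT
    refine ⟨Z, g, hh, hT, ⟨⟨hZ, ?_⟩, ?_⟩⟩
    · exact improv_iso_closed B hB i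
        (((shiftFunctor C (j - 1 : ℤ)).mapIso e₁).trans
          ((shiftFunctorAdd' C j (-1) (j - 1) (by ring)).app Z)) hZ₁
    · exact improv_iso_closed B hB i
        (((shiftFunctor C (j + 1 : ℤ)).mapIso e₂).trans
          ((shiftFunctorAdd' C j 1 (j + 1) rfl).app Z)) hZ₂

end Aux

/-- the completion with respect to `{B n}` is contained in the
completion with respect to the improvement of `{B n}`: the pre-completions
agree, the compactly supported elements for `{B n}` are contained in those for
the improvement, and hence the completions are nested. -/
theorem completion_subset_completion_improv (B : ℕ → Set C) (hB : IsMetric B) :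
    preCompletion B = preCompletion (improv B) ∧
    cSupp B ⊆ cSupp (improv B) ∧
    preCompletion B ∩ cSupp B ⊆ preCompletion (improv B) ∩ cSupp (improv B) := by
  have hGC : ∀ E : ℕ ⥤ C, IsGoodCauchy B E ↔ IsGoodCauchy (improv B) E := by
    intro E
    constructor
    · exact goodCauchy_improv B hB E
    · intro hE i j
      obtain ⟨M, hM⟩ := hE i j
      refine ⟨M, fun m m' h hm => ?_⟩
      obtain ⟨Z, g, hh, hT, hZ⟩ := hM m m' h hm
      exact ⟨Z, g, hh, hT, improv_subset B i hZ⟩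
  have h1 : preCompletion B = preCompletion (improv B) := by
    ext P
    constructor
    · rintro ⟨E, hE, hiso⟩; exact ⟨E, (hGC E).1 hE, hiso⟩
    · rintro ⟨E, hE, hiso⟩; exact ⟨E, (hGC E).2 hE, hiso⟩
  have h2 : cSupp B ⊆ cSupp (improv B) := by
    intro F hF j
    obtain ⟨i, hi⟩ := hF j
    exact ⟨i, fun X hX => hi X (improv_subset B i hX)⟩
  exact ⟨h1, h2, h1 ▸ Set.inter_subset_inter subset_rfl h2⟩

end Defs
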